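/- Let T > 0 and let Θ be a mild solution of the critical dissipative quasi-geostrophic equation on [0,T] with data Θ₀, such that sup_{0≤t≤T} ‖Θ(t)‖_{X⁰} < ∞ and ∫₀^T ‖Θ(t)‖_{X¹} dt < ∞. Then for every t ∈ [0,T], ‖Θ(t)‖_{X⁰} + ∫₀^t ‖Θ(z)‖_{X¹} dz ≤ ‖Θ₀‖_{X⁰} + ∫₀^t ‖Θ(z)‖_{X⁰} ‖Θ(z)‖_{X¹} dz. -/

import Mathlib

open MeasureTheory Filter
open scoped ENNReal NNReal

noncomputable section

abbrev E2 : Type := EuclideanSpace ℝ (Fin 2)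

/-- Fourier-side `X^σ` norm: `∫ |ξ|^σ |g ξ| dξ` (valued in `ℝ≥0∞`). -/
def Xnorm (σ : ℝ) (g : E2 → ℂ) : ℝ≥0∞ :=
  ∫⁻ ξ : E2, ENNReal.ofReal (‖ξ‖ ^ σ) * ‖g ξ‖₊

/-- Fourier-side quasi-geostrophic nonlinearity `N[Θ]`. -/
def QGN (Θ : ℝ → E2 → ℂ) (z : ℝ) (ξ : E2) : ℂ :=
  ∫ η : E2, (((ξ 0 * η 1 - ξ 1 * η 0) / ‖η‖ : ℝ) : ℂ) * Θ z (ξ - η) * Θ z η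

/-- `Θ` is a mild solution on `[0,T]` with data `Θ₀`. -/
def IsMildSolutionOn (Θ : ℝ → E2 → ℂ) (Θ₀ : E2 → ℂ) (T : ℝ) : Prop :=
  ∀ t ∈ Set.Icc (0:ℝ) T, ∀ᵐ ξ : E2 ∂volume, Θ t ξ =
    ((Real.exp (-(t * ‖ξ‖)) : ℝ) : ℂ) * Θ₀ ξ +
    ∫ z in (0:ℝ)..t, ((Real.exp (-((t - z) * ‖ξ‖)) : ℝ) : ℂ) * QGN Θ z ξ

/-- `Θ` is a global mild solution with data `Θ₀`. -/
def IsGlobalMildSolution (Θ : ℝ → E2 → ℂ) (Θ₀ : E2 → ℂ) : Prop :=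
  ∀ t : ℝ, 0 ≤ t → ∀ᵐ ξ : E2 ∂volume, Θ t ξ =
    ((Real.exp (-(t * ‖ξ‖)) : ℝ) : ℂ) * Θ₀ ξ +
    ∫ z in (0:ℝ)..t, ((Real.exp (-((t - z) * ‖ξ‖)) : ℝ) : ℂ) * QGN Θ z ξ

/-- `Θ ∈ C_b([0,∞), X^σ)`: bounded `X^σ` norm and `L¹`-continuity of `t ↦ |·|^σ Θ(t,·)`. -/
def CbX (σ : ℝ) (Θ : ℝ → E2 → ℂ) : Prop :=
  (⨆ t ∈ Set.Ici (0:ℝ), Xnorm σ (Θ t)) < ⊤ ∧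
  ∀ t ∈ Set.Ici (0:ℝ),
    Tendsto (fun s => ∫⁻ ξ : E2, ENNReal.ofReal (‖ξ‖ ^ σ) * ‖Θ s ξ - Θ t ξ‖₊)
      (nhdsWithin t (Set.Ici 0)) (nhds 0)

/-! For each frequency `ξ`, the mild formulation and `|ξ₁η₂ - ξ₂η₁|/|η| ≤ |ξ - η|` bound `|Θ(t,ξ)|`
by the solution `D(t)` of the scalar damped equation `D' = -|ξ| D + G(t,ξ)`, `D(0) = |Θ₀(ξ)|`, whose
source `G(s,ξ) = ∫ |ξ - η| |Θ(s,ξ-η)| |Θ(s,η)| dη` has `∫ G(s,ξ) dξ = ‖Θ(s)‖_{X⁰} ‖Θ(s)‖_{X¹}`.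
Integrating the equation gives the exact balance `D(t) + ∫₀ᵗ |ξ| D = D(0) + ∫₀ᵗ G`, and integrating
this over `ξ` (Tonelli) yields the estimate. -/

theorem ofReal_exp_add_lintegral_mul_exp {r a t : ℝ} (hr : 0 ≤ r) (hat : a ≤ t) :
    ENNReal.ofReal (Real.exp (-((t - a) * r))) +
      ∫⁻ z in Set.Ioc a t, ENNReal.ofReal (r * Real.exp (-((z - a) * r))) = 1 := by
  have hderiv : ∀ z ∈ Set.uIcc a t, HasDerivAt (fun z => -Real.exp (-((z - a) * r)))
      (r * Real.exp (-((z - a) * r))) z := fun z _ => by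
    have hlin : HasDerivAt (fun z => -((z - a) * r)) (-r) z := by
      simpa using (((hasDerivAt_id z).sub_const a).mul_const r).fun_neg
    rw [show r * Real.exp (-((z - a) * r)) = -(Real.exp (-((z - a) * r)) * -r) by ring]
    exact hlin.exp.fun_neg
  have hcont : Continuous fun z => r * Real.exp (-((z - a) * r)) := by fun_prop
  have hexp_le : Real.exp (-((t - a) * r)) ≤ 1 :=
    Real.exp_le_one_iff.mpr (neg_nonpos.mpr (mul_nonneg (sub_nonneg.mpr hat) hr))
  rw [← ofReal_integral_eq_lintegral_ofReal hcont.integrableOn_Ioc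
      (Eventually.of_forall fun z => by positivity), ← intervalIntegral.integral_of_le hat,
    intervalIntegral.integral_eq_sub_of_hasDerivAt hderiv (hcont.intervalIntegrable a t),
    ← ENNReal.ofReal_add (Real.exp_pos _).le (by simpa using hexp_le)]
  simp

theorem lintegral_Ioc_lintegral_Ioc_swap {a t : ℝ} {f : ℝ → ℝ → ℝ≥0∞}
    (hf : Measurable fun p : ℝ × ℝ => f p.1 p.2) :
    ∫⁻ z in Set.Ioc a t, ∫⁻ s in Set.Ioc a z, f z s =
      ∫⁻ s in Set.Ioc a t, ∫⁻ z in Set.Ioc s t, f z s := by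
  let g : ℝ → ℝ → ℝ≥0∞ := fun z s => if s ≤ z then f z s else 0
  have hg : Measurable (Function.uncurry g) :=
    Measurable.ite (measurableSet_le measurable_snd measurable_fst) hf measurable_const
  calc ∫⁻ z in Set.Ioc a t, ∫⁻ s in Set.Ioc a z, f z s
      = ∫⁻ z in Set.Ioc a t, ∫⁻ s in Set.Ioc a t, g z s := by
        refine setLIntegral_congr_fun measurableSet_Ioc fun z hz => ?_
        rw [← Set.Iic_inter_Ioc_of_le hz.2, ← Measure.restrict_restrict measurableSet_Iic,
          ← lintegral_indicator measurableSet_Iic]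
        rfl
    _ = ∫⁻ s in Set.Ioc a t, ∫⁻ z in Set.Ioc a t, g z s := lintegral_lintegral_swap hg.aemeasurable
    _ = ∫⁻ s in Set.Ioc a t, ∫⁻ z in Set.Ioc s t, f z s := by
        refine setLIntegral_congr_fun measurableSet_Ioc fun s hs => ?_
        rw [Measure.restrict_congr_set (Ioc_ae_eq_Icc (a := s) (b := t))]
        have hIcc : Set.Ici s ∩ Set.Ioc a t = Set.Icc s t := by
          ext z
          simp only [Set.mem_inter_iff, Set.mem_Ici, Set.mem_Ioc, Set.mem_Icc]
          exact ⟨fun h => ⟨h.1, h.2.2⟩, fun h => ⟨h.1, hs.1.trans_le h.1, h.2⟩⟩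
        rw [← hIcc, ← Measure.restrict_restrict measurableSet_Ici,
          ← lintegral_indicator measurableSet_Ici]
        rfl

theorem measurable_setLIntegral_Ioc {α : Type*} [MeasurableSpace α] {f : α → ℝ → ℝ≥0∞}
    (hf : Measurable fun p : α × ℝ => f p.1 p.2) (a : ℝ) {b : α → ℝ} (hb : Measurable b) :
    Measurable fun x => ∫⁻ s in Set.Ioc a (b x), f x s := by
  have hset : MeasurableSet {p : α × ℝ | a < p.2 ∧ p.2 ≤ b p.1} :=
    (measurableSet_lt measurable_const measurable_snd).inter
      (measurableSet_le measurable_snd (hb.comp measurable_fst))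
  convert (hf.indicator hset).lintegral_prod_right' (ν := volume) using 2 with x
  rw [← lintegral_indicator measurableSet_Ioc]
  rfl

def duhamel (r : ℝ) (a : ℝ≥0∞) (G : ℝ → ℝ≥0∞) (t : ℝ) : ℝ≥0∞ :=
  ENNReal.ofReal (Real.exp (-(t * r))) * a +
    ∫⁻ s in Set.Ioc 0 t, ENNReal.ofReal (Real.exp (-((t - s) * r))) * G s

theorem duhamel_add_lintegral_mul_duhamel {r t : ℝ} (hr : 0 ≤ r) (ht : 0 ≤ t) (a : ℝ≥0∞)
    {G : ℝ → ℝ≥0∞} (hG : Measurable G) :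
    duhamel r a G t + ∫⁻ z in Set.Ioc 0 t, ENNReal.ofReal r * duhamel r a G z =
      a + ∫⁻ s in Set.Ioc 0 t, G s := by
  have hkernel : Measurable fun p : ℝ × ℝ => ENNReal.ofReal (r * Real.exp (-((p.1 - p.2) * r))) :=
    by fun_prop
  have hdamped : ∀ z, ENNReal.ofReal r *
      ∫⁻ s in Set.Ioc 0 z, ENNReal.ofReal (Real.exp (-((z - s) * r))) * G s =
      ∫⁻ s in Set.Ioc 0 z, ENNReal.ofReal (r * Real.exp (-((z - s) * r))) * G s := fun z => by
    rw [← lintegral_const_mul _ (by fun_prop)]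
    simp_rw [← mul_assoc, ← ENNReal.ofReal_mul hr]
  have hsource : ∫⁻ z in Set.Ioc 0 t, ENNReal.ofReal r *
      ∫⁻ s in Set.Ioc 0 z, ENNReal.ofReal (Real.exp (-((z - s) * r))) * G s =
      ∫⁻ s in Set.Ioc 0 t,
        (∫⁻ z in Set.Ioc s t, ENNReal.ofReal (r * Real.exp (-((z - s) * r)))) * G s := by
    simp_rw [hdamped]
    rw [lintegral_Ioc_lintegral_Ioc_swap (hkernel.fun_mul (hG.comp measurable_snd))]
    exact setLIntegral_congr_fun measurableSet_Ioc fun s _ => lintegral_mul_const _ (by fun_prop)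
  have hdata : ∫⁻ z in Set.Ioc 0 t, ENNReal.ofReal r * (ENNReal.ofReal (Real.exp (-(z * r))) * a) =
      (∫⁻ z in Set.Ioc 0 t, ENNReal.ofReal (r * Real.exp (-(z * r)))) * a := by
    simp_rw [← mul_assoc, ← ENNReal.ofReal_mul hr]
    exact lintegral_mul_const _ (by fun_prop)
  have hsplit : ∫⁻ z in Set.Ioc 0 t, ENNReal.ofReal r * duhamel r a G z =
      (∫⁻ z in Set.Ioc 0 t, ENNReal.ofReal r * (ENNReal.ofReal (Real.exp (-(z * r))) * a)) +
      ∫⁻ z in Set.Ioc 0 t, ENNReal.ofReal r *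
        ∫⁻ s in Set.Ioc 0 z, ENNReal.ofReal (Real.exp (-((z - s) * r))) * G s := by
    simp_rw [duhamel, mul_add]
    exact lintegral_add_left (by fun_prop) _
  have hsum : (∫⁻ s in Set.Ioc 0 t, ENNReal.ofReal (Real.exp (-((t - s) * r))) * G s) +
      ∫⁻ s in Set.Ioc 0 t,
        (∫⁻ z in Set.Ioc s t, ENNReal.ofReal (r * Real.exp (-((z - s) * r)))) * G s =
      ∫⁻ s in Set.Ioc 0 t, G s := by
    rw [← lintegral_add_left (by fun_prop)]
    refine setLIntegral_congr_fun measurableSet_Ioc fun s hs => ?_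
    rw [← add_mul, ofReal_exp_add_lintegral_mul_exp hr hs.2, one_mul]
  have hinitial : ENNReal.ofReal (Real.exp (-(t * r))) +
      ∫⁻ z in Set.Ioc 0 t, ENNReal.ofReal (r * Real.exp (-(z * r))) = 1 := by
    simpa only [sub_zero] using ofReal_exp_add_lintegral_mul_exp hr ht
  rw [hsplit, hdata, hsource, duhamel, add_add_add_comm, ← add_mul, hinitial, one_mul, hsum]

theorem Measurable.duhamel {α : Type*} [MeasurableSpace α] {r : α → ℝ} {a : α → ℝ≥0∞}
    {G : α → ℝ → ℝ≥0∞} {t : α → ℝ} (hr : Measurable r) (ha : Measurable a)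
    (hG : Measurable fun p : α × ℝ => G p.1 p.2) (ht : Measurable t) :
    Measurable fun x => duhamel (r x) (a x) (G x) (t x) := by
  refine (by fun_prop : Measurable fun x => ENNReal.ofReal (Real.exp (-(t x * r x))) * a x).add ?_
  refine measurable_setLIntegral_Ioc ?_ 0 ht
  exact (by fun_prop : Measurable fun p : α × ℝ =>
    ENNReal.ofReal (Real.exp (-((t p.1 - p.2) * r p.1)))).mul hG

theorem lintegral_lintegral_sub_mul {G : Type*} [MeasurableSpace G] [AddGroup G]
    [MeasurableAdd G] [MeasurableSub₂ G] {μ : Measure G} [SFinite μ] [μ.IsAddRightInvariant]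
    {f g : G → ℝ≥0∞} (hf : Measurable f) (hg : Measurable g) :
    ∫⁻ ξ, ∫⁻ η, f (ξ - η) * g η ∂μ ∂μ = (∫⁻ ξ, f ξ ∂μ) * ∫⁻ η, g η ∂μ := by
  rw [lintegral_lintegral_swap
    ((hf.comp (measurable_fst.sub measurable_snd)).mul (hg.comp measurable_snd)).aemeasurable]
  have hinner : ∀ η, ∫⁻ ξ, f (ξ - η) * g η ∂μ = (∫⁻ ξ, f ξ ∂μ) * g η := fun η => by
    rw [lintegral_mul_const _ (by fun_prop), lintegral_sub_right_eq_self]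
  simp_rw [hinner]
  exact lintegral_const_mul _ hg

theorem abs_det_le_norm_mul_norm (a b : E2) : |a 0 * b 1 - a 1 * b 0| ≤ ‖a‖ * ‖b‖ := by
  have hsq : ∀ v : E2, ‖v‖ ^ 2 = v 0 ^ 2 + v 1 ^ 2 := fun v => by
    simp [EuclideanSpace.norm_sq_eq, Fin.sum_univ_two]
  refine abs_le_of_sq_le_sq ?_ (by positivity)
  rw [mul_pow, hsq, hsq]
  nlinarith [sq_nonneg (a 0 * b 0 + a 1 * b 1)]

theorem abs_cross_div_norm_le_norm_sub (ξ η : E2) :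
    |(ξ 0 * η 1 - ξ 1 * η 0) / ‖η‖| ≤ ‖ξ - η‖ := by
  rcases eq_or_ne η 0 with rfl | hη
  · simp
  have hη' : 0 < ‖η‖ := norm_pos_iff.mpr hη
  have hcross : ξ 0 * η 1 - ξ 1 * η 0 = (ξ - η) 0 * η 1 - (ξ - η) 1 * η 0 := by
    simp only [PiLp.sub_apply]; ring
  rw [abs_div, abs_of_pos hη', div_le_iff₀ hη', hcross]
  exact abs_det_le_norm_mul_norm _ _

theorem Xnorm_zero (g : E2 → ℂ) : Xnorm 0 g = ∫⁻ ξ, ‖g ξ‖ₑ := by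
  simp [Xnorm, enorm_eq_nnnorm]

theorem Xnorm_one (g : E2 → ℂ) : Xnorm 1 g = ∫⁻ ξ, ENNReal.ofReal ‖ξ‖ * ‖g ξ‖ₑ := by
  simp only [Xnorm, Real.rpow_one, enorm_eq_nnnorm]

def qgMajorant (g : E2 → ℂ) (ξ : E2) : ℝ≥0∞ :=
  ∫⁻ η, ‖ξ - η‖ₑ * ‖g (ξ - η)‖ₑ * ‖g η‖ₑ

theorem enorm_QGN_le_qgMajorant (Θ : ℝ → E2 → ℂ) (z : ℝ) (ξ : E2) :
    ‖QGN Θ z ξ‖ₑ ≤ qgMajorant (Θ z) ξ := by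
  refine (enorm_integral_le_lintegral_enorm _).trans (lintegral_mono fun η => ?_)
  simp only [enorm_mul]
  gcongr
  rw [← ofReal_norm, ← ofReal_norm, Complex.norm_real, Real.norm_eq_abs]
  exact ENNReal.ofReal_le_ofReal (abs_cross_div_norm_le_norm_sub ξ η)

theorem lintegral_qgMajorant {g : E2 → ℂ} (hg : Measurable g) :
    ∫⁻ ξ, qgMajorant g ξ = Xnorm 0 g * Xnorm 1 g := by
  simp_rw [qgMajorant, Xnorm_zero, Xnorm_one, ofReal_norm, mul_comm (∫⁻ ξ, ‖g ξ‖ₑ)]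
  exact lintegral_lintegral_sub_mul (measurable_enorm.mul hg.enorm) hg.enorm

theorem measurable_qgMajorant {Θ : ℝ → E2 → ℂ} (hΘ : Measurable (Function.uncurry Θ)) :
    Measurable fun p : ℝ × E2 => qgMajorant (Θ p.1) p.2 := by
  have hshifted : Measurable fun q : (ℝ × E2) × E2 => Θ q.1.1 (q.1.2 - q.2) :=
    hΘ.comp (measurable_fst.fst.prodMk (measurable_fst.snd.sub measurable_snd))
  have hslice : Measurable fun q : (ℝ × E2) × E2 => Θ q.1.1 q.2 :=
    hΘ.comp (measurable_fst.fst.prodMk measurable_snd)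
  exact Measurable.lintegral_prod_right' (f := fun q : (ℝ × E2) × E2 =>
    ‖q.1.2 - q.2‖ₑ * ‖Θ q.1.1 (q.1.2 - q.2)‖ₑ * ‖Θ q.1.1 q.2‖ₑ) (by fun_prop)

def mildMajorant (Θ₀ : E2 → ℂ) (Θ : ℝ → E2 → ℂ) (t : ℝ) (ξ : E2) : ℝ≥0∞ :=
  duhamel ‖ξ‖ ‖Θ₀ ξ‖ₑ (fun s => qgMajorant (Θ s) ξ) t

theorem measurable_mildMajorant {Θ₀ : E2 → ℂ} {Θ : ℝ → E2 → ℂ} (hmeas₀ : Measurable Θ₀)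
    (hmeas : Measurable (Function.uncurry Θ)) :
    Measurable fun p : E2 × ℝ => mildMajorant Θ₀ Θ p.2 p.1 :=
  Measurable.duhamel measurable_fst.norm (hmeas₀.comp measurable_fst).enorm
    ((measurable_qgMajorant hmeas).comp (f := fun p : (E2 × ℝ) × ℝ => (p.2, p.1.1))
      (by fun_prop)) measurable_snd

theorem IsMildSolutionOn.enorm_le_mildMajorant {Θ : ℝ → E2 → ℂ} {Θ₀ : E2 → ℂ} {T τ : ℝ}
    (hmild : IsMildSolutionOn Θ Θ₀ T) (hτ : τ ∈ Set.Icc 0 T) :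
    ∀ᵐ ξ, ‖Θ τ ξ‖ₑ ≤ mildMajorant Θ₀ Θ τ ξ := by
  filter_upwards [hmild τ hτ] with ξ hξ
  have hexp : ∀ x : ℝ, ‖((Real.exp x : ℝ) : ℂ)‖ₑ = ENNReal.ofReal (Real.exp x) := fun x => by
    rw [← ofReal_norm, Complex.norm_real, Real.norm_of_nonneg (Real.exp_pos x).le]
  rw [hξ, mildMajorant, duhamel, intervalIntegral.integral_of_le hτ.1]
  refine (enorm_add_le _ _).trans (add_le_add (by rw [enorm_mul, hexp]) ?_)
  refine (enorm_integral_le_lintegral_enorm _).trans (lintegral_mono fun z => ?_)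
  rw [enorm_mul, hexp]
  exact mul_le_mul_right (enorm_QGN_le_qgMajorant Θ z ξ) _

theorem IsMildSolutionOn.Xnorm_add_lintegral_Xnorm_le {Θ : ℝ → E2 → ℂ} {Θ₀ : E2 → ℂ}
    {T t : ℝ} (hmeas₀ : Measurable Θ₀) (hmeas : Measurable (Function.uncurry Θ))
    (hmild : IsMildSolutionOn Θ Θ₀ T) (ht : t ∈ Set.Icc 0 T) :
    Xnorm 0 (Θ t) + ∫⁻ z in Set.Ioc 0 t, Xnorm 1 (Θ z) ≤
      ∫⁻ ξ, (mildMajorant Θ₀ Θ t ξ +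
        ∫⁻ z in Set.Ioc 0 t, ENNReal.ofReal ‖ξ‖ * mildMajorant Θ₀ Θ z ξ) := by
  have hD := measurable_mildMajorant hmeas₀ hmeas
  have hDt : Measurable (mildMajorant Θ₀ Θ t) := hD.comp (f := fun ξ => (ξ, t)) (by fun_prop)
  rw [lintegral_add_left hDt,
    lintegral_lintegral_swap (measurable_fst.norm.ennreal_ofReal.mul hD).aemeasurable]
  refine add_le_add
    ((Xnorm_zero _).trans_le (lintegral_mono_ae (hmild.enorm_le_mildMajorant ht)))
    (setLIntegral_mono' measurableSet_Ioc fun z hz => ?_)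
  rw [Xnorm_one]
  refine lintegral_mono_ae ?_
  filter_upwards [hmild.enorm_le_mildMajorant ⟨hz.1.le, hz.2.trans ht.2⟩] with ξ hξ
  exact mul_le_mul_right hξ _

theorem qg_apriori_estimate_general (T : ℝ) (Θ₀ : E2 → ℂ) (hmeas₀ : Measurable Θ₀)
    (Θ : ℝ → E2 → ℂ) (hmeas : Measurable (Function.uncurry Θ))
    (hmild : IsMildSolutionOn Θ Θ₀ T) :
    ∀ t ∈ Set.Icc (0:ℝ) T,
      Xnorm 0 (Θ t) + ∫⁻ z in Set.Ioc (0:ℝ) t, Xnorm 1 (Θ z)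
        ≤ Xnorm 0 Θ₀ + ∫⁻ z in Set.Ioc (0:ℝ) t, Xnorm 0 (Θ z) * Xnorm 1 (Θ z) := by
  intro t ht
  have hQ := measurable_qgMajorant hmeas
  calc Xnorm 0 (Θ t) + ∫⁻ z in Set.Ioc 0 t, Xnorm 1 (Θ z)
      ≤ ∫⁻ ξ, (mildMajorant Θ₀ Θ t ξ +
          ∫⁻ z in Set.Ioc 0 t, ENNReal.ofReal ‖ξ‖ * mildMajorant Θ₀ Θ z ξ) :=
        hmild.Xnorm_add_lintegral_Xnorm_le hmeas₀ hmeas ht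
    _ = ∫⁻ ξ, (‖Θ₀ ξ‖ₑ + ∫⁻ s in Set.Ioc 0 t, qgMajorant (Θ s) ξ) :=
        lintegral_congr fun ξ => duhamel_add_lintegral_mul_duhamel (norm_nonneg ξ) ht.1 _
          (hQ.comp (f := fun s => (s, ξ)) (by fun_prop))
    _ = Xnorm 0 Θ₀ + ∫⁻ s in Set.Ioc 0 t, Xnorm 0 (Θ s) * Xnorm 1 (Θ s) := by
        have hQswap : Measurable fun p : E2 × ℝ => qgMajorant (Θ p.2) p.1 :=
          hQ.comp (f := Prod.swap) measurable_swap
        rw [lintegral_add_left hmeas₀.enorm, Xnorm_zero,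
          lintegral_lintegral_swap (f := fun ξ s => qgMajorant (Θ s) ξ) hQswap.aemeasurable]
        exact congrArg _ (lintegral_congr fun s =>
          lintegral_qgMajorant (hmeas.comp (f := fun ξ => (s, ξ)) (by fun_prop)))

/-- the a priori inequality
`‖Θ(t)‖_{X⁰} + ∫₀^t ‖Θ‖_{X¹} ≤ ‖Θ₀‖_{X⁰} + ∫₀^t ‖Θ‖_{X⁰}‖Θ‖_{X¹}` for mild solutions. -/
theorem qg_apriori_estimate (T : ℝ) (hT : 0 < T) (Θ₀ : E2 → ℂ) (hmeas₀ : Measurable Θ₀)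
    (Θ : ℝ → E2 → ℂ) (hmeas : Measurable (Function.uncurry Θ))
    (hmild : IsMildSolutionOn Θ Θ₀ T)
    (hsup : (⨆ t ∈ Set.Icc (0:ℝ) T, Xnorm 0 (Θ t)) < ⊤)
    (hint : (∫⁻ t in Set.Icc (0:ℝ) T, Xnorm 1 (Θ t)) < ⊤) :
    ∀ t ∈ Set.Icc (0:ℝ) T,
      Xnorm 0 (Θ t) + ∫⁻ z in Set.Ioc (0:ℝ) t, Xnorm 1 (Θ z)
        ≤ Xnorm 0 Θ₀ + ∫⁻ z in Set.Ioc (0:ℝ) t, Xnorm 0 (Θ z) * Xnorm 1 (Θ z) :=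
  qg_apriori_estimate_general T Θ₀ hmeas₀ Θ hmeas hmild

end
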